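/- arXiv:2009.03295 — 2 statements merged into one kernel-verified Lean document; each statement's English description precedes it below -/
import Mathlib

section
/- In any strongly connected infinite digraph D with an infinite vertex set U ⊆ V(D), D contains a star or comb attached to U and a reverse star or reverse comb attached to U sharing their attachment sets. -/
variable {V : Type*}

/-- Reachability from `a` to `b` by a directed walk staying inside the vertex set `S`. -/
def ReachIn (D : V → V → Prop) (S : Set V) (a b : V) : Prop :=
  a ∈ S ∧ b ∈ S ∧ Relation.ReflTransGen (fun x y => y ∈ S ∧ D x y) a b

/-- `C` is a strong component of the subdigraph of `D` induced on `S`. -/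
def IsSCCIn (D : V → V → Prop) (S : Set V) (C : Set V) : Prop :=
  ∃ a ∈ S, C = {b | ReachIn D S a b ∧ ReachIn D S b a}

/-- A directed ray in `D`. -/
def IsRay (D : V → V → Prop) (R : ℕ → V) : Prop :=
  Function.Injective R ∧ ∀ n, D (R n) (R (n + 1))

/-- A reverse directed ray in `D`. -/
def IsRevRay (D : V → V → Prop) (R : ℕ → V) : Prop :=
  Function.Injective R ∧ ∀ n, D (R (n + 1)) (R n)

/-- The ray `R` has a tail inside the vertex set `C`. -/
def HasTailIn (R : ℕ → V) (C : Set V) : Prop :=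
  ∃ n, ∀ m, n ≤ m → R m ∈ C

/-- A solid ray: for every finite `X` it has a tail in some strong component of `D − X`. -/
def Solid (D : V → V → Prop) (R : ℕ → V) : Prop :=
  IsRay D R ∧ ∀ X : Finset V, ∃ C, IsSCCIn D ((↑X : Set V)ᶜ) C ∧ HasTailIn R C

/-- Two solid rays are end-equivalent: for every finite `X` they have tails in the same
strong component of `D − X`. -/
def EndEquiv (D : V → V → Prop) (R R' : ℕ → V) : Prop :=
  ∀ X : Finset V, ∃ C, IsSCCIn D ((↑X : Set V)ᶜ) C ∧ HasTailIn R C ∧ HasTailIn R' C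

/-- `Ω` is an end of `D`: the class of solid rays equivalent to some solid ray. -/
def IsEnd (D : V → V → Prop) (Ω : Set (ℕ → V)) : Prop :=
  ∃ R, Solid D R ∧ Ω = {R' | Solid D R' ∧ EndEquiv D R R'}

/-- A (nonempty) directed path, recorded as its list of vertices. -/
def IsPathList (D : V → V → Prop) (l : List V) : Prop :=
  l ≠ [] ∧ l.Nodup ∧ l.Chain' D

/-- Infinitely many pairwise disjoint `A`–`B` paths in `D` (each meeting `A` precisely in its
first vertex and `B` precisely in its last vertex). -/
def DisjointPathsFrom (D : V → V → Prop) (A B : Set V) : Prop :=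
  ∃ P : ℕ → List V,
    (∀ k, IsPathList D (P k)) ∧
    (∀ j k, j ≠ k → ∀ x ∈ P j, x ∉ P k) ∧
    (∀ k, ∃ a, (P k).head? = some a ∧ a ∈ A) ∧
    (∀ k, ∃ b, (P k).getLast? = some b ∧ b ∈ B) ∧
    (∀ k, ∀ x ∈ (P k).tail, x ∉ A) ∧
    (∀ k, ∀ x ∈ (P k).dropLast, x ∉ B)

/-- A necklace in `D`: an inflated symmetric ray with finite branch sets (beads), given by its
beads together with the connecting (subdividing) paths in both directions. -/
structure Necklace (D : V → V → Prop) where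
  bead : ℕ → Set V
  fwd : ℕ → List V
  bwd : ℕ → List V
  bead_fin : ∀ n, (bead n).Finite
  bead_nonempty : ∀ n, (bead n).Nonempty
  bead_disj : ∀ m n, m ≠ n → Disjoint (bead m) (bead n)
  bead_strong : ∀ n, ∀ a ∈ bead n, ∀ b ∈ bead n, ReachIn D (bead n) a b
  fwd_path : ∀ n, IsPathList D (fwd n)
  bwd_path : ∀ n, IsPathList D (bwd n)
  fwd_head : ∀ n a, (fwd n).head? = some a → a ∈ bead n
  fwd_last : ∀ n b, (fwd n).getLast? = some b → b ∈ bead (n + 1)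
  bwd_head : ∀ n a, (bwd n).head? = some a → a ∈ bead (n + 1)
  bwd_last : ∀ n b, (bwd n).getLast? = some b → b ∈ bead n
  fwd_inner : ∀ n, ∀ x ∈ (fwd n).tail.dropLast, ∀ m, x ∉ bead m
  bwd_inner : ∀ n, ∀ x ∈ (bwd n).tail.dropLast, ∀ m, x ∉ bead m
  fwd_fwd_disj : ∀ m n, m ≠ n → ∀ x ∈ (fwd m).tail.dropLast, x ∉ (fwd n).tail.dropLast
  bwd_bwd_disj : ∀ m n, m ≠ n → ∀ x ∈ (bwd m).tail.dropLast, x ∉ (bwd n).tail.dropLast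
  fwd_bwd_disj : ∀ m n, ∀ x ∈ (fwd m).tail.dropLast, x ∉ (bwd n).tail.dropLast

/-- The vertex set of a necklace. -/
def Necklace.verts {D : V → V → Prop} (N : Necklace D) : Set V :=
  (⋃ n, N.bead n) ∪ {x | ∃ n, x ∈ N.fwd n ∨ x ∈ N.bwd n}

/-- A necklace is attached to `𝒰` if infinitely many of its beads meet every set in `𝒰`. -/
def Necklace.AttachedTo {D : V → V → Prop} (N : Necklace D) (𝒰 : Finset (Set V)) : Prop :=
  {n | ∀ U ∈ 𝒰, (N.bead n ∩ U).Nonempty}.Infinite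

/-- A necklace represents the end of the solid ray `R`: for every finite `X`, all but finitely
many beads lie in the strong component of `D − X` in which `R` has a tail. -/
def NecklaceRepresents {D : V → V → Prop} (N : Necklace D) (R : ℕ → V) : Prop :=
  ∀ X : Finset V, ∃ C, IsSCCIn D ((↑X : Set V)ᶜ) C ∧ HasTailIn R C ∧
    ∃ n₀, ∀ n, n₀ ≤ n → N.bead n ⊆ C

/-- `URankLE D 𝒰 S α`: the subdigraph of `D` induced on `S` has `𝒰`-rank at most `α`. -/
inductive URankLE (D : V → V → Prop) (𝒰 : Finset (Set V)) : Set V → Ordinal → Prop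
  | base (S : Set V) (α : Ordinal) (U : Set V) (hU : U ∈ 𝒰) (h : (U ∩ S).Finite) :
      URankLE D 𝒰 S α
  | step (S : Set V) (α : Ordinal) (X : Finset V) (r : Set V → Ordinal)
      (hr : ∀ C, IsSCCIn D (S \ ↑X) C → r C < α)
      (h : ∀ C, IsSCCIn D (S \ ↑X) C → URankLE D 𝒰 C (r C)) :
      URankLE D 𝒰 S α

/-- `D` (induced on `S`) has `𝒰`-rank exactly `α`. -/
def HasURank (D : V → V → Prop) (𝒰 : Finset (Set V)) (S : Set V) (α : Ordinal) : Prop :=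
  URankLE D 𝒰 S α ∧ ∀ β < α, ¬ URankLE D 𝒰 S β

/-- A vertex-direction of `D`. -/
def IsVertexDirection (D : V → V → Prop) (f : Finset V → Set V) : Prop :=
  (∀ X : Finset V, IsSCCIn D ((↑X : Set V)ᶜ) (f X)) ∧
  ∀ X Y : Finset V, X ⊆ Y → f Y ⊆ f X

/-- A separation `(A,B)` of `D`: `A ∪ B = V(D)` and no edge from `B∖A` to `A∖B`. -/
def IsSep (D : V → V → Prop) (A B : Set V) : Prop :=
  A ∪ B = Set.univ ∧ ∀ a ∈ B \ A, ∀ b ∈ A \ B, ¬ D a b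

/-- A finite order separation `(A,B)` points towards the vertex-direction `f`. -/
def PointsTowards (D : V → V → Prop) (f : Finset V → Set V) (A B : Set V)
    (h : (A ∩ B).Finite) : Prop :=
  f h.toFinset ⊆ B \ A

/-- A finite order separation `(A,B)` points away from the vertex-direction `f`. -/
def PointsAway (D : V → V → Prop) (f : Finset V → Set V) (A B : Set V)
    (h : (A ∩ B).Finite) : Prop :=
  f h.toFinset ⊆ A \ B

/-- The vertex `v` dominates the vertex-direction `f`. -/
def DomDir (D : V → V → Prop) (v : V) (f : Finset V → Set V) : Prop :=
  ∀ A B, IsSep D A B → ∀ h : (A ∩ B).Finite, PointsAway D f A B h → v ∈ A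

/-- An infinite `v`–`B` fan: infinitely many `v`–`B` paths meeting pairwise precisely in `v`. -/
def Fan (D : V → V → Prop) (v : V) (B : Set V) : Prop :=
  ∃ P : ℕ → List V,
    (∀ k, IsPathList D (P k)) ∧
    (∀ k, (P k).head? = some v) ∧
    (∀ k, 2 ≤ (P k).length) ∧
    (∀ k, ∃ b, (P k).getLast? = some b ∧ b ∈ B) ∧
    (∀ k, ∀ x ∈ (P k).dropLast, x ∉ B) ∧
    (∀ j k, j ≠ k → ∀ x ∈ (P j).tail, x ∉ (P k).tail)

/-- Limit edge between the ends of the solid rays `R` and `R'`. -/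
def LimitEdgeEE (D : V → V → Prop) (R R' : ℕ → V) : Prop :=
  ∀ (X : Finset V) C C', IsSCCIn D ((↑X : Set V)ᶜ) C → HasTailIn R C →
    IsSCCIn D ((↑X : Set V)ᶜ) C' → HasTailIn R' C' → C ≠ C' →
    ∃ a ∈ C, ∃ b ∈ C', D a b

/-- Limit edge from the vertex `v` to the end of the solid ray `R`. -/
def LimitEdgeVE (D : V → V → Prop) (v : V) (R : ℕ → V) : Prop :=
  ∀ (X : Finset V) C, IsSCCIn D ((↑X : Set V)ᶜ) C → HasTailIn R C → v ∉ C →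
    ∃ b ∈ C, D v b

/-- Limit edge from the end of the solid ray `R` to the vertex `v`. -/
def LimitEdgeEV (D : V → V → Prop) (R : ℕ → V) (v : V) : Prop :=
  ∀ (X : Finset V) C, IsSCCIn D ((↑X : Set V)ᶜ) C → HasTailIn R C → v ∉ C →
    ∃ a ∈ C, D a v

/-- A subdivided infinite out-star in `D` with centre `c`, given by its paths. -/
def IsStar (D : V → V → Prop) (c : V) (P : ℕ → List V) : Prop :=
  (∀ k, IsPathList D (P k)) ∧ (∀ k, (P k).head? = some c) ∧
  (∀ k, 2 ≤ (P k).length) ∧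
  (∀ j k, j ≠ k → ∀ x ∈ (P j).tail, x ∉ (P k).tail)

/-- A directed comb in `D` with spine `R`, given by its (pairwise disjoint) paths each meeting
`R` precisely in its first vertex. -/
def IsComb (D : V → V → Prop) (R : ℕ → V) (P : ℕ → List V) : Prop :=
  IsRay D R ∧ (∀ k, IsPathList D (P k)) ∧
  (∀ k, ∃ n, (P k).head? = some (R n)) ∧
  (∀ k, ∀ x ∈ (P k).tail, ∀ n, x ≠ R n) ∧
  (∀ j k, j ≠ k → ∀ x ∈ P j, x ∉ P k)

/-- A star in `D` whose `k`-th leaf is `a k`. -/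
def StarAttachedWith (D : V → V → Prop) (a : ℕ → V) : Prop :=
  ∃ c P, IsStar D c P ∧ ∀ k, (P k).getLast? = some (a k)

/-- A comb in `D` whose `k`-th tooth is `a k`. -/
def CombAttachedWith (D : V → V → Prop) (a : ℕ → V) : Prop :=
  ∃ R P, IsComb D R P ∧ ∀ k, (P k).getLast? = some (a k)

/-- `a` and `b` are consecutive entries of the list `l`. -/
def AdjInList (l : List V) (a b : V) : Prop :=
  ∃ l₁ l₂, l = l₁ ++ a :: b :: l₂

/-- The edge relation of (a subdigraph of `D` forming) the necklace `N`: all `D`-edges inside a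
bead together with the edges of the connecting paths. -/
def Necklace.edges {D : V → V → Prop} (N : Necklace D) (a b : V) : Prop :=
  D a b ∧ ((∃ n, a ∈ N.bead n ∧ b ∈ N.bead n) ∨
    (∃ n, AdjInList (N.fwd n) a b ∨ AdjInList (N.bwd n) a b))

/-- A generalized ray: a directed ray (`true`) or a reverse directed ray (`false`). -/
def IsGenRay (D : V → V → Prop) : Bool × (ℕ → V) → Prop
  | (true, R) => IsRay D R
  | (false, R) => IsRevRay D R

/-- Pre-end equivalence of generalized rays: infinitely many disjoint paths in both
directions. -/
def PreEquiv (D : V → V → Prop) (Q Q' : Bool × (ℕ → V)) : Prop :=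
  DisjointPathsFrom D (Set.range Q.2) (Set.range Q'.2) ∧
  DisjointPathsFrom D (Set.range Q'.2) (Set.range Q.2)

/-- The pre-end `γ` includes the end represented by the solid ray `R`. -/
def IncludesEnd (D : V → V → Prop) (γ : Set (Bool × (ℕ → V))) (R : ℕ → V) : Prop :=
  Solid D R ∧ ∀ R', Solid D R' → EndEquiv D R R' → (true, R') ∈ γ

/-- The set of edges of `D` from `A` to `B`. -/
def EdgesBetween (D : V → V → Prop) (A B : Set V) : Set (V × V) :=
  {e | D e.1 e.2 ∧ e.1 ∈ A ∧ e.2 ∈ B}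

/-- A bundle of `D − X`. -/
def IsBundle (D : V → V → Prop) (X : Finset V) (E : Set (V × V)) : Prop :=
  E.Nonempty ∧
  ((∃ C C', IsSCCIn D ((↑X : Set V)ᶜ) C ∧ IsSCCIn D ((↑X : Set V)ᶜ) C' ∧ C ≠ C' ∧
      E = EdgesBetween D C C') ∨
   (∃ v ∈ X, ∃ C, IsSCCIn D ((↑X : Set V)ᶜ) C ∧
      (E = EdgesBetween D {v} C ∨ E = EdgesBetween D C {v})))

/-- Compatibility `f(X) ⊇ f(Y)` between values of a direction (a strong component is regarded
as containing a bundle if it contains all its edges). -/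
def DirCompat : Set V ⊕ Set (V × V) → Set V ⊕ Set (V × V) → Prop
  | Sum.inl C, Sum.inl C' => C' ⊆ C
  | Sum.inl C, Sum.inr E' => ∀ e ∈ E', e.1 ∈ C ∧ e.2 ∈ C
  | Sum.inr _, Sum.inl _ => False
  | Sum.inr E, Sum.inr E' => E' ⊆ E

/-- A direction of `D`: maps each finite `X` to a strong component or a bundle of `D − X`,
compatibly. -/
def IsDirection (D : V → V → Prop) (f : Finset V → Set V ⊕ Set (V × V)) : Prop :=
  (∀ X : Finset V, (∃ C, IsSCCIn D ((↑X : Set V)ᶜ) C ∧ f X = Sum.inl C) ∨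
    (∃ E, IsBundle D X E ∧ f X = Sum.inr E)) ∧
  ∀ X Y : Finset V, X ⊆ Y → DirCompat (f X) (f Y)

/-- An edge-direction: a direction whose value is a bundle for some finite `X`. -/
def IsEdgeDirection (D : V → V → Prop) (f : Finset V → Set V ⊕ Set (V × V)) : Prop :=
  IsDirection D f ∧ ∃ (X : Finset V) (E : Set (V × V)), f X = Sum.inr E

/-- The three kinds of (potential) limit edges: end–end, vertex–end, end–vertex.
Ends are given as sets of (solid) rays. -/
inductive LimitEdgeObj (V : Type*) where
  | ee (Ω₁ Ω₂ : Set (ℕ → V))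
  | ve (v : V) (Ω : Set (ℕ → V))
  | ev (Ω : Set (ℕ → V)) (v : V)

/-- `l` is a limit edge of `D`. -/
def IsLimitEdge (D : V → V → Prop) : LimitEdgeObj V → Prop
  | LimitEdgeObj.ee Ω₁ Ω₂ => IsEnd D Ω₁ ∧ IsEnd D Ω₂ ∧ Ω₁ ≠ Ω₂ ∧
      ∀ R ∈ Ω₁, ∀ R' ∈ Ω₂, LimitEdgeEE D R R'
  | LimitEdgeObj.ve v Ω => IsEnd D Ω ∧ ∀ R ∈ Ω, LimitEdgeVE D v R
  | LimitEdgeObj.ev Ω v => IsEnd D Ω ∧ ∀ R ∈ Ω, LimitEdgeEV D R v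

/-- `f` agrees with the map `f_λ` for the end–end limit edge `Ω₁Ω₂`. -/
def AgreesEE (D : V → V → Prop) (Ω₁ Ω₂ : Set (ℕ → V))
    (f : Finset V → Set V ⊕ Set (V × V)) : Prop :=
  ∀ (X : Finset V), ∀ R ∈ Ω₁, ∀ R' ∈ Ω₂, ∀ C C',
    IsSCCIn D ((↑X : Set V)ᶜ) C → HasTailIn R C →
    IsSCCIn D ((↑X : Set V)ᶜ) C' → HasTailIn R' C' →
    (C = C' → f X = Sum.inl C) ∧ (C ≠ C' → f X = Sum.inr (EdgesBetween D C C'))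

/-- `f` agrees with the map `f_λ` for the vertex–end limit edge `vΩ`. -/
def AgreesVE (D : V → V → Prop) (v : V) (Ω : Set (ℕ → V))
    (f : Finset V → Set V ⊕ Set (V × V)) : Prop :=
  ∀ (X : Finset V), ∀ R ∈ Ω, ∀ C, IsSCCIn D ((↑X : Set V)ᶜ) C → HasTailIn R C →
    (v ∈ C → f X = Sum.inl C) ∧
    (v ∈ (↑X : Set V) → f X = Sum.inr (EdgesBetween D {v} C)) ∧
    (∀ C', IsSCCIn D ((↑X : Set V)ᶜ) C' → v ∈ C' → C' ≠ C →
      f X = Sum.inr (EdgesBetween D C' C))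

/-- `f` agrees with the map `f_λ` for the end–vertex limit edge `Ωv`. -/
def AgreesEV (D : V → V → Prop) (Ω : Set (ℕ → V)) (v : V)
    (f : Finset V → Set V ⊕ Set (V × V)) : Prop :=
  ∀ (X : Finset V), ∀ R ∈ Ω, ∀ C, IsSCCIn D ((↑X : Set V)ᶜ) C → HasTailIn R C →
    (v ∈ C → f X = Sum.inl C) ∧
    (v ∈ (↑X : Set V) → f X = Sum.inr (EdgesBetween D C {v})) ∧
    (∀ C', IsSCCIn D ((↑X : Set V)ᶜ) C' → v ∈ C' → C' ≠ C →
      f X = Sum.inr (EdgesBetween D C C'))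

/-- `f` agrees with `f_λ` for the limit edge `l`. -/
def Agrees (D : V → V → Prop) : LimitEdgeObj V → (Finset V → Set V ⊕ Set (V × V)) → Prop
  | LimitEdgeObj.ee Ω₁ Ω₂, f => AgreesEE D Ω₁ Ω₂ f
  | LimitEdgeObj.ve v Ω, f => AgreesVE D v Ω f
  | LimitEdgeObj.ev Ω v, f => AgreesEV D Ω v f

/-!
Take a breadth-first out-arborescence `T` of `D` rooted anywhere. If some vertex `v` has infinitely
many descendants in `U` but each child of `v` only finitely many, then infinitely many children
lead to `U`, and the tree paths from `v` through distinct such children form a star. Otherwise,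
starting from the root and always moving to a child with infinitely many descendants in `U`
gives a ray in `T`; from the last ray vertex above a tooth of `U` the tree path to the tooth
leaves the ray at once, and choosing the teeth deeper and deeper makes these paths disjoint:
a comb. Doing this in `D` and then in the reverse of `D` for the teeth just found yields
both attachments on a common sequence of teeth.
-/

lemma ReachIn.reflTransGen {D : V → V → Prop} {S : Set V} {a b : V} (h : ReachIn D S a b) :
    Relation.ReflTransGen D a b :=
  Relation.ReflTransGen.mono (fun _ _ hxy => hxy.2) _ _ h.2.2

lemma StarAttachedWith.comp {D : V → V → Prop} {a : ℕ → V} (h : StarAttachedWith D a)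
    {g : ℕ → ℕ} (hg : Function.Injective g) : StarAttachedWith D (a ∘ g) := by
  obtain ⟨c, P, ⟨hpath, hhead, hlen, hdisj⟩, hlast⟩ := h
  exact ⟨c, P ∘ g, ⟨fun k => hpath _, fun k => hhead _, fun k => hlen _,
    fun j k hjk => hdisj _ _ (hg.ne hjk)⟩, fun k => hlast _⟩

lemma CombAttachedWith.comp {D : V → V → Prop} {a : ℕ → V} (h : CombAttachedWith D a)
    {g : ℕ → ℕ} (hg : Function.Injective g) : CombAttachedWith D (a ∘ g) := by
  obtain ⟨R, P, ⟨hray, hpath, hhead, htail, hdisj⟩, hlast⟩ := h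
  exact ⟨R, P ∘ g, ⟨hray, fun k => hpath _, fun k => hhead _, fun k => htail _,
    fun j k hjk => hdisj _ _ (hg.ne hjk)⟩, fun k => hlast _⟩

def outBall (D : V → V → Prop) (v₀ : V) : ℕ → Set V
  | 0 => {v₀}
  | n + 1 => outBall D v₀ n ∪ {v | ∃ u ∈ outBall D v₀ n, D u v}

lemma exists_level_of_reachable {D : V → V → Prop} {v₀ : V}
    (h : ∀ v, Relation.ReflTransGen D v₀ v) :
    ∃ d : V → ℕ, (∀ v, d v = 0 ↔ v = v₀) ∧ ∀ v, d v ≠ 0 → ∃ u, D u v ∧ d u + 1 = d v := by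
  have hball : ∀ v, ∃ n, v ∈ outBall D v₀ n := fun v => by
    induction h v with
    | refl => exact ⟨0, rfl⟩
    | tail _ huv ih =>
      obtain ⟨n, hn⟩ := ih
      exact ⟨n + 1, Or.inr ⟨_, hn, huv⟩⟩
  set d : V → ℕ := fun v => sInf {n | v ∈ outBall D v₀ n}
  have d_le {v : V} {n : ℕ} (hv : v ∈ outBall D v₀ n) : d v ≤ n := Nat.sInf_le hv
  have mem_ball (v : V) : v ∈ outBall D v₀ (d v) := Nat.sInf_mem (hball v)
  refine ⟨d, fun v => ⟨fun hv => ?_, ?_⟩, fun v hv => ?_⟩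
  · simpa [hv, outBall] using mem_ball v
  · rintro rfl
    exact Nat.le_zero.1 (d_le rfl)
  · obtain ⟨n, hn⟩ := Nat.exists_eq_succ_of_ne_zero hv
    rcases hn ▸ mem_ball v with hvn | ⟨u, hu, huv⟩
    · exact absurd (d_le hvn) (by omega)
    · have := d_le hu
      have := d_le (v := v) (n := d u + 1) (Or.inr ⟨u, mem_ball u, huv⟩)
      exact ⟨u, huv, by omega⟩

/-- A spanning out-arborescence of `D` together with its level function; by convention the
root is its own parent. -/
structure OutTree (D : V → V → Prop) where
  root : V
  parent : V → V
  depth : V → ℕ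
  depth_eq_zero_iff : ∀ v, depth v = 0 ↔ v = root
  depth_parent : ∀ v, depth (parent v) = depth v - 1
  adj_parent : ∀ v, v ≠ root → D (parent v) v

namespace OutTree

theorem nonempty_of_reachable {D : V → V → Prop} {v₀ : V}
    (h : ∀ v, Relation.ReflTransGen D v₀ v) : Nonempty (OutTree D) := by
  classical
  obtain ⟨depth, hzero, hlevel⟩ := exists_level_of_reachable h
  choose! parent hparent using hlevel
  refine ⟨⟨v₀, fun v => if depth v = 0 then v₀ else parent v, depth, hzero, fun v => ?_,
    fun v hv => ?_⟩⟩
  · split_ifs with hv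
    · rw [(hzero v₀).2 rfl, hv]
    · have := (hparent v hv).2
      omega
  · have hv : depth v ≠ 0 := mt (hzero v).1 hv
    simpa [hv] using (hparent v hv).1

variable {D : V → V → Prop} (T : OutTree D)

lemma depth_root : T.depth T.root = 0 := (T.depth_eq_zero_iff _).2 rfl

lemma depth_iterate_parent (k : ℕ) (v : V) : T.depth (T.parent^[k] v) = T.depth v - k := by
  induction k with
  | zero => rfl
  | succ k ih => rw [Function.iterate_succ_apply', T.depth_parent, ih]; omega

def IsAncestor (v u : V) : Prop :=
  T.depth v ≤ T.depth u ∧ T.parent^[T.depth u - T.depth v] u = v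

def descendants (v : V) : Set V := {u | T.IsAncestor v u}

variable {T}

lemma isAncestor_iterate_parent {k : ℕ} {u : V} (hk : k ≤ T.depth u) :
    T.IsAncestor (T.parent^[k] u) u := by
  rw [IsAncestor, T.depth_iterate_parent, Nat.sub_sub_self hk]
  exact ⟨by omega, rfl⟩

variable (T) in
lemma isAncestor_root (u : V) : T.IsAncestor T.root u := by
  have h : T.parent^[T.depth u] u = T.root :=
    (T.depth_eq_zero_iff _).1 (by rw [depth_iterate_parent, Nat.sub_self])
  exact h ▸ isAncestor_iterate_parent le_rfl

variable (T) in
lemma isAncestor_refl (u : V) : T.IsAncestor u u := ⟨le_rfl, by rw [Nat.sub_self]; rfl⟩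

lemma IsAncestor.depth_le {v u : V} (h : T.IsAncestor v u) : T.depth v ≤ T.depth u := h.1

lemma IsAncestor.eq_of_depth_eq {v w u : V} (hv : T.IsAncestor v u) (hw : T.IsAncestor w u)
    (h : T.depth v = T.depth w) : v = w := by
  rw [← hv.2, ← hw.2, h]

lemma IsAncestor.trans {v w u : V} (hvw : T.IsAncestor v w) (hwu : T.IsAncestor w u) :
    T.IsAncestor v u := by
  refine ⟨hvw.1.trans hwu.1, ?_⟩
  have : T.depth u - T.depth v = (T.depth w - T.depth v) + (T.depth u - T.depth w) := by
    have := hvw.1; have := hwu.1; omega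
  rw [this, Function.iterate_add_apply, hwu.2, hvw.2]

lemma IsAncestor.of_depth_le {v w u : V} (hv : T.IsAncestor v u) (hw : T.IsAncestor w u)
    (h : T.depth v ≤ T.depth w) : T.IsAncestor v w := by
  refine ⟨h, ?_⟩
  have : T.depth u - T.depth v = (T.depth w - T.depth v) + (T.depth u - T.depth w) := by
    have := hw.1; omega
  calc T.parent^[T.depth w - T.depth v] w
      = T.parent^[T.depth w - T.depth v] (T.parent^[T.depth u - T.depth w] u) := by rw [hw.2]
    _ = v := by rw [← Function.iterate_add_apply, ← this, hv.2]

lemma exists_isAncestor_depth_eq {u : V} {n : ℕ} (hn : n ≤ T.depth u) :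
    ∃ w, T.IsAncestor w u ∧ T.depth w = n :=
  ⟨T.parent^[T.depth u - n] u, isAncestor_iterate_parent (Nat.sub_le _ _),
    by rw [depth_iterate_parent]; omega⟩

lemma IsAncestor.adj_of_depth_eq_succ {v u : V} (h : T.IsAncestor v u)
    (hd : T.depth u = T.depth v + 1) : D v u := by
  have hu : u ≠ T.root := fun hu => by rw [hu, depth_root] at hd; omega
  have := T.adj_parent u hu
  rwa [← Function.iterate_one T.parent, ← show T.depth u - T.depth v = 1 by omega, h.2] at this

variable (T) in
/-- The tree path from `v` down to `u`, when `v` is an ancestor of `u`. -/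
def path (v u : V) : List V :=
  ((List.range (T.depth u - T.depth v + 1)).map fun i => T.parent^[i] u).reverse

lemma length_path (v u : V) : (T.path v u).length = T.depth u - T.depth v + 1 := by
  simp [path]

lemma isPathList_path (v u : V) : IsPathList D (T.path v u) := by
  refine ⟨by simp [path], ?_, ?_⟩
  · refine List.nodup_reverse.2 (List.Nodup.map_on (fun i hi j hj hij => ?_) List.nodup_range)
    have := congrArg T.depth hij
    simp only [depth_iterate_parent, List.mem_range] at this hi hj
    omega
  · refine List.isChain_reverse.2 ((List.isChain_map _).2 ((List.isChain_range_succ _ _).2 ?_))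
    intro m hm
    rw [Nat.succ_eq_add_one, Function.iterate_succ_apply']
    refine T.adj_parent _ fun h => ?_
    have := congrArg T.depth h
    rw [depth_iterate_parent, depth_root] at this
    omega

lemma head?_path {v u : V} (h : T.IsAncestor v u) : (T.path v u).head? = some v := by
  rw [path, List.head?_reverse, List.range_succ, List.map_append, List.map_singleton,
    List.getLast?_concat, h.2]

lemma getLast?_path (v u : V) : (T.path v u).getLast? = some u := by
  rw [path, List.getLast?_reverse, List.range_succ_eq_map, List.map_cons, List.head?_cons,
    Function.iterate_zero_apply]

lemma isAncestor_of_mem_path {v u x : V} (h : T.IsAncestor v u) (hx : x ∈ T.path v u) :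
    T.IsAncestor x u ∧ T.depth v ≤ T.depth x := by
  have := h.depth_le
  obtain ⟨i, hi, rfl⟩ : ∃ i < T.depth u - T.depth v + 1, T.parent^[i] u = x := by
    simpa only [path, List.mem_reverse, List.mem_map, List.mem_range] using hx
  exact ⟨isAncestor_iterate_parent (by omega), by rw [depth_iterate_parent]; omega⟩

lemma isAncestor_of_mem_tail_path {v u x : V} (hx : x ∈ (T.path v u).tail) :
    T.IsAncestor x u ∧ T.depth v < T.depth x := by
  obtain ⟨i, hi, rfl⟩ : ∃ i < T.depth u - T.depth v, T.parent^[i] u = x := by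
    simpa only [path, List.tail_reverse, List.range_succ, List.map_append, List.map_singleton,
      List.dropLast_concat, List.mem_reverse, List.mem_map, List.mem_range] using hx
  exact ⟨isAncestor_iterate_parent (by omega), by rw [depth_iterate_parent]; omega⟩

section Star

variable {U : Set V} {v : V}

lemma infinite_setOf_child_meets (hv : (U ∩ T.descendants v).Infinite)
    (hchild : ∀ c, T.IsAncestor v c → T.depth c = T.depth v + 1 → (U ∩ T.descendants c).Finite) :
    {c | T.IsAncestor v c ∧ T.depth c = T.depth v + 1 ∧
      (U ∩ T.descendants c).Nonempty}.Infinite := by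
  intro hfin
  refine hv (((Set.finite_singleton v).union
    (hfin.biUnion fun c hc => hchild c hc.1 hc.2.1)).subset ?_)
  rintro u ⟨huU, hvu⟩
  by_cases huv : T.depth u = T.depth v
  · exact Or.inl ((T.isAncestor_refl u).eq_of_depth_eq hvu huv)
  · obtain ⟨c, hcu, hc⟩ := exists_isAncestor_depth_eq (T := T) (u := u) (n := T.depth v + 1)
      (by have := hvu.depth_le; omega)
    exact Or.inr (Set.mem_biUnion ⟨hvu.of_depth_le hcu (by omega), hc, u, huU, hcu⟩ ⟨huU, hcu⟩)

theorem exists_starAttachedWith (hv : (U ∩ T.descendants v).Infinite)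
    (hchild : ∀ c, T.IsAncestor v c → T.depth c = T.depth v + 1 → (U ∩ T.descendants c).Finite) :
    ∃ a : ℕ → V, Function.Injective a ∧ (∀ k, a k ∈ U) ∧ StarAttachedWith D a := by
  set S := {c | T.IsAncestor v c ∧ T.depth c = T.depth v + 1 ∧ (U ∩ T.descendants c).Nonempty}
  have hS : S.Infinite := infinite_setOf_child_meets hv hchild
  set c : ℕ → V := fun k => hS.natEmbedding S k
  have hc (k : ℕ) : c k ∈ S := (hS.natEmbedding S k).2
  have hcinj : Function.Injective c := Subtype.val_injective.comp (hS.natEmbedding S).injective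
  choose a haU hca using fun k => (hc k).2.2
  have hdepth_c (j k : ℕ) : T.depth (c j) = T.depth (c k) := by rw [(hc j).2.1, (hc k).2.1]
  have hbelow (k : ℕ) {x : V} (hx : x ∈ (T.path v (a k)).tail) : T.IsAncestor (c k) x := by
    obtain ⟨hxa, hdx⟩ := isAncestor_of_mem_tail_path hx
    exact (hca k).of_depth_le hxa (by rw [(hc k).2.1]; omega)
  refine ⟨a, fun j k hjk => hcinj ((hca j).eq_of_depth_eq (hjk ▸ hca k) (hdepth_c j k)), haU,
    v, fun k => T.path v (a k), ⟨fun k => isPathList_path _ _,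
      fun k => head?_path ((hc k).1.trans (hca k)), fun k => ?_,
      fun j k hjk x hxj hxk => hjk (hcinj ((hbelow j hxj).eq_of_depth_eq (hbelow k hxk)
        (hdepth_c j k)))⟩,
    fun k => getLast?_path _ _⟩
  rw [length_path]
  have := (hca k).depth_le
  have := (hc k).2.1
  omega

end Star

section Comb

variable {U : Set V} {r : ℕ → V}

lemma exists_ray (hU : U.Infinite)
    (hchild : ∀ w, (U ∩ T.descendants w).Infinite →
      ∃ c, T.IsAncestor w c ∧ T.depth c = T.depth w + 1 ∧ (U ∩ T.descendants c).Infinite) :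
    ∃ r : ℕ → V, (∀ n, T.depth (r n) = n) ∧ (∀ n, T.IsAncestor (r n) (r (n + 1))) ∧
      ∀ n, (U ∩ T.descendants (r n)).Infinite := by
  choose next hnext using fun w : {w // (U ∩ T.descendants w).Infinite} => hchild w.1 w.2
  let r' : ℕ → {w // (U ∩ T.descendants w).Infinite} := fun n =>
    Nat.rec ⟨T.root, hU.mono fun u hu => ⟨hu, T.isAncestor_root u⟩⟩
      (fun _ w => ⟨next w, (hnext w).2.2⟩) n
  refine ⟨fun n => (r' n).1, fun n => ?_, fun n => (hnext (r' n)).1, fun n => (r' n).2⟩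
  induction n with
  | zero => exact T.depth_root
  | succ n ih => exact (hnext (r' n)).2.1.trans (congrArg (· + 1) ih)

lemma exists_teeth (hU : ∀ n, (U ∩ T.descendants (r n)).Nonempty) :
    ∃ (a : ℕ → V) (s : ℕ → ℕ), (∀ k, a k ∈ U ∧ T.IsAncestor (r (s k)) (a k)) ∧
      ∀ k, T.depth (a k) < s (k + 1) := by
  choose pick hpick using hU
  let s : ℕ → ℕ := fun k => Nat.rec 0 (fun _ m => T.depth (pick m) + 1) k
  exact ⟨fun k => pick (s k), s, fun k => hpick (s k), fun k => Nat.lt_succ_self _⟩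

variable (hdepth : ∀ n, T.depth (r n) = n) (hr : ∀ n, T.IsAncestor (r n) (r (n + 1)))
include hdepth hr

lemma isRay_of_isAncestor_succ : IsRay D r :=
  ⟨fun m n h => by rw [← hdepth m, ← hdepth n, h],
    fun n => (hr n).adj_of_depth_eq_succ (by rw [hdepth, hdepth])⟩

theorem combAttachedWith_of_ray {a : ℕ → V} {s : ℕ → ℕ} (ha : ∀ k, T.IsAncestor (r (s k)) (a k))
    (hs : ∀ j k, j < k → T.depth (a j) < s k) : CombAttachedWith D a := by
  classical
  have hdepth_le {n k : ℕ} (h : T.IsAncestor (r n) (a k)) : n ≤ T.depth (a k) :=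
    hdepth n ▸ h.depth_le
  -- the tooth `a k` hangs off the ray at its deepest ray ancestor `r (M k)`
  let M : ℕ → ℕ := fun k => Nat.findGreatest (fun n => T.IsAncestor (r n) (a k)) (T.depth (a k))
  have hM (k : ℕ) : T.IsAncestor (r (M k)) (a k) := 
    Nat.findGreatest_spec (P := fun n => T.IsAncestor (r n) (a k)) (hdepth_le (ha k)) (ha k)
  have hsM (k : ℕ) : s k ≤ M k := Nat.le_findGreatest (hdepth_le (ha k)) (ha k)
  refine ⟨r, fun k => T.path (r (M k)) (a k), ⟨isRay_of_isAncestor_succ hdepth hr,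
    fun k => isPathList_path _ _, fun k => ⟨M k, head?_path (hM k)⟩,
    fun k x hx n hxn => ?_, fun j k hjk x hxj hxk => ?_⟩, fun k => getLast?_path _ _⟩
  · obtain ⟨hxa, hdx⟩ := isAncestor_of_mem_tail_path hx
    subst hxn
    rw [hdepth, hdepth] at hdx
    have : n ≤ M k := Nat.le_findGreatest (hdepth_le hxa) hxa
    omega
  · wlog hlt : j < k generalizing j k
    · exact this k j hjk.symm hxk hxj (by omega)
    have h1 := (isAncestor_of_mem_path (hM j) hxj).1.depth_le
    have h2 := (isAncestor_of_mem_path (hM k) hxk).2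
    rw [hdepth] at h2
    have := hs j k hlt
    have := hsM k
    omega

theorem exists_combAttachedWith (hU : ∀ n, (U ∩ T.descendants (r n)).Nonempty) :
    ∃ a : ℕ → V, Function.Injective a ∧ (∀ k, a k ∈ U) ∧ CombAttachedWith D a := by
  obtain ⟨a, s, ha, has⟩ := exists_teeth hU
  have hsa (k : ℕ) : s k ≤ T.depth (a k) := hdepth (s k) ▸ (ha k).2.depth_le
  have hs : StrictMono s := strictMono_nat_of_lt_succ fun k => (hsa k).trans_lt (has k)
  have hsep (j k : ℕ) (h : j < k) : T.depth (a j) < s k := (has j).trans_le (hs.monotone h)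
  have hmono : StrictMono fun k => T.depth (a k) := fun j k h => (hsep j k h).trans_le (hsa k)
  exact ⟨a, hmono.injective.of_comp, fun k => (ha k).1,
    combAttachedWith_of_ray hdepth hr (fun k => (ha k).2) hsep⟩

end Comb

end OutTree

theorem OutTree.exists_starAttachedWith_or_combAttachedWith {D : V → V → Prop} (T : OutTree D)
    {U : Set V} (hU : U.Infinite) :
    ∃ a : ℕ → V, Function.Injective a ∧ (∀ k, a k ∈ U) ∧
      (StarAttachedWith D a ∨ CombAttachedWith D a) := by
  by_cases h : ∃ v, (U ∩ T.descendants v).Infinite ∧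
      ∀ c, T.IsAncestor v c → T.depth c = T.depth v + 1 → (U ∩ T.descendants c).Finite
  · obtain ⟨v, hv, hchild⟩ := h
    obtain ⟨a, ha, haU, hstar⟩ := exists_starAttachedWith hv hchild
    exact ⟨a, ha, haU, .inl hstar⟩
  · push Not at h
    obtain ⟨r, hdepth, hr, hinf⟩ := exists_ray hU h
    obtain ⟨a, ha, haU, hcomb⟩ := exists_combAttachedWith hdepth hr fun n => (hinf n).nonempty
    exact ⟨a, ha, haU, .inr hcomb⟩

theorem directed_star_comb_lemma_general (D : V → V → Prop)
    (hsc : ∀ a b : V, ReachIn D Set.univ a b) (U : Set V) (hU : U.Infinite) :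
    ∃ a : ℕ → V, Function.Injective a ∧ (∀ k, a k ∈ U) ∧
      (StarAttachedWith D a ∨ CombAttachedWith D a) ∧
      (StarAttachedWith (fun x y => D y x) a ∨ CombAttachedWith (fun x y => D y x) a) := by
  obtain ⟨v₀, -⟩ := hU.nonempty
  obtain ⟨T⟩ := OutTree.nonempty_of_reachable fun v => (hsc v₀ v).reflTransGen
  obtain ⟨T'⟩ := OutTree.nonempty_of_reachable (D := fun x y => D y x) fun v =>
    Relation.reflTransGen_swap.2 (hsc v v₀).reflTransGen
  obtain ⟨a, ha, haU, hfwd⟩ := T.exists_starAttachedWith_or_combAttachedWith hU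
  obtain ⟨b, hb, hba, hbwd⟩ :=
    T'.exists_starAttachedWith_or_combAttachedWith (Set.infinite_range_of_injective ha)
  choose g hg using hba
  have hgb : a ∘ g = b := funext hg
  have hginj : Function.Injective g := fun j k h => hb (by rw [← hg j, ← hg k, h])
  refine ⟨b, hb, fun k => hg k ▸ haU (g k), ?_, hbwd⟩
  rcases hfwd with hstar | hcomb
  · exact .inl (hgb ▸ hstar.comp hginj)
  · exact .inr (hgb ▸ hcomb.comp hginj)

/-- Directed star–comb lemma. -/
theorem directed_star_comb_lemma (D : V → V → Prop) [Infinite V]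
    (hsc : ∀ a b : V, ReachIn D Set.univ a b) (U : Set V) (hU : U.Infinite) :
    ∃ a : ℕ → V, Function.Injective a ∧ (∀ k, a k ∈ U) ∧
      (StarAttachedWith D a ∨ CombAttachedWith D a) ∧
      (StarAttachedWith (fun x y => D y x) a ∨ CombAttachedWith (fun x y => D y x) a) :=
  directed_star_comb_lemma_general D hsc U hU
end

section
/- Let D be a digraph and 𝒰 a finite set (of vertex sets). If D has 𝒰-rank α and H is a subdigraph of D, then H has a 𝒰-rank β ≤ α. -/
variable {V : Type*}

/-! Removing vertices or edges can only split strong components: every strong component of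
`H − X` lies inside one of `D − X`. So the derivation of `URankLE D 𝒰 univ α` transfers, with
the same finite sets `X`, to `H`, by induction; the rank of `H` is then the least such bound. -/

variable {D E : V → V → Prop} {𝒰 : Finset (Set V)}

theorem ReachIn.mono {S T : Set V} {a b : V} (hED : E ≤ D) (hST : S ⊆ T)
    (h : ReachIn E S a b) : ReachIn D T a b :=
  ⟨hST h.1, hST h.2.1,
    Relation.ReflTransGen.mono (fun _ _ hxy => ⟨hST hxy.1, hED _ _ hxy.2⟩) _ _ h.2.2⟩

theorem IsSCCIn.exists_superset {S T C : Set V} (hED : E ≤ D) (hST : S ⊆ T)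
    (hC : IsSCCIn E S C) : ∃ C', IsSCCIn D T C' ∧ C ⊆ C' := by
  obtain ⟨a, ha, rfl⟩ := hC
  exact ⟨_, ⟨a, hST ha, rfl⟩, fun b hb => ⟨hb.1.mono hED hST, hb.2.mono hED hST⟩⟩

theorem URankLE.mono {T : Set V} {α : Ordinal} (hED : E ≤ D)
    (h : URankLE D 𝒰 T α) {S : Set V} (hST : S ⊆ T) : URankLE E 𝒰 S α := by
  induction h generalizing S with
  | base T α U hU hfin => exact .base S α U hU (hfin.subset (Set.inter_subset_inter_right U hST))
  | step T α X r hr _ ih =>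
    choose! big hbig using fun C (hC : IsSCCIn E (S \ ↑X) C) =>
      hC.exists_superset hED (Set.sdiff_subset_sdiff_left (t := (X : Set V)) hST)
    exact .step S α X (r ∘ big) (fun C hC => hr _ (hbig C hC).1)
      (fun C hC => ih _ (hbig C hC).1 (hbig C hC).2)

theorem URankLE.exists_hasURank_le {S : Set V} {α : Ordinal} (h : URankLE D 𝒰 S α) :
    ∃ β ≤ α, HasURank D 𝒰 S β :=
  ⟨sInf {β | URankLE D 𝒰 S β}, csInf_le' h, csInf_mem ⟨α, h⟩,
    fun _ hβ => notMem_of_lt_csInf' hβ⟩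

/-- If `D` has `𝒰`-rank `α` and `H` (vertex set `S`, edge relation `E`) is a subdigraph of `D`,
then `H` has a `𝒰`-rank `β ≤ α`. -/
theorem urank_of_subdigraph (D E : V → V → Prop) (S : Set V) (𝒰 : Finset (Set V))
    (α : Ordinal) (hsub : ∀ a b, E a b → D a b ∧ a ∈ S ∧ b ∈ S)
    (hD : HasURank D 𝒰 Set.univ α) :
    ∃ β ≤ α, HasURank E 𝒰 S β :=
  (hD.1.mono (fun a b h => (hsub a b h).1) (Set.subset_univ S)).exists_hasURank_le
end
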